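/- arXiv:1112.2099 — 6 statements merged into one kernel-verified Lean document; each statement's English description precedes it below -/
import Mathlib

section
/- Let i ≥ 1 be an integer and let θ₀, …, θ_i be an admissible family of real angles (θ_j − θ_k ∉ πℤ for all j ≠ k). If ξ ∈ V_i is i-liftably tangent to c_{θ_k} for every k ∈ {0, …, i}, then ξ = 0. (Equivalently, the i-th reduced Kodaira–Spencer–Mather map ᵢω̄ of the multicusp c_{(θ₀, …, θ_i)} is injective.) -/
open Polynomial

/-- First component of the rotated cusp `c_θ(x) = R_θ (x², x³)` as a polynomial over `K`. -/
noncomputable def cusp1 (K : Type*) [RCLike K] (θ : ℝ) : Polynomial K :=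
  C ((Real.cos θ : K)) * X ^ 2 - C ((Real.sin θ : K)) * X ^ 3

/-- Second component of the rotated cusp. -/
noncomputable def cusp2 (K : Type*) [RCLike K] (θ : ℝ) : Polynomial K :=
  C ((Real.sin θ : K)) * X ^ 2 + C ((Real.cos θ : K)) * X ^ 3

/-- First component of the derivative `c_θ'(x)`. -/
noncomputable def dcusp1 (K : Type*) [RCLike K] (θ : ℝ) : Polynomial K :=
  C ((Real.cos θ : K)) * (2 * X) - C ((Real.sin θ : K)) * (3 * X ^ 2)

/-- Second component of the derivative `c_θ'(x)`. -/
noncomputable def dcusp2 (K : Type*) [RCLike K] (θ : ℝ) : Polynomial K :=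
  C ((Real.sin θ : K)) * (2 * X) + C ((Real.cos θ : K)) * (3 * X ^ 2)

/-- Composition `P(c_θ(x))` of a two-variable polynomial with the rotated cusp. -/
noncomputable def cuspEval (K : Type*) [RCLike K] (θ : ℝ) (P : MvPolynomial (Fin 2) K) :
    Polynomial K :=
  MvPolynomial.aeval ![cusp1 K θ, cusp2 K θ] P

/-- `ξ = (P, Q)` is `i`-liftably tangent to the rotated cusp `c_θ`:
there is `η ∈ K[x]` with `x^(2i+2)` dividing both `P(c_θ(x)) - η(x)·c_θ'(x)₁`
and `Q(c_θ(x)) - η(x)·c_θ'(x)₂`.  This characterizes the kernel of the `i`-th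
reduced Kodaira–Spencer–Mather map of the cusp `c_θ`. -/
def LiftTang (K : Type*) [RCLike K] (i : ℕ) (θ : ℝ)
    (ξ : MvPolynomial (Fin 2) K × MvPolynomial (Fin 2) K) : Prop :=
  ∃ η : Polynomial K,
    (X : Polynomial K) ^ (2 * i + 2) ∣ cuspEval K θ ξ.1 - η * dcusp1 K θ ∧
    (X : Polynomial K) ^ (2 * i + 2) ∣ cuspEval K θ ξ.2 - η * dcusp2 K θ

/-- `V_i`: pairs of homogeneous polynomials of degree `i` in `K[X, Y]`,
identified with the jet space `m₀^i θ₀(2)/m₀^(i+1) θ₀(2)`. -/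
noncomputable def Vsp (K : Type*) [RCLike K] (i : ℕ) :
    Submodule K (MvPolynomial (Fin 2) K × MvPolynomial (Fin 2) K) :=
  (MvPolynomial.homogeneousSubmodule (Fin 2) K i).prod
    (MvPolynomial.homogeneousSubmodule (Fin 2) K i)

/-- A family of angles is admissible if the difference of any two distinct members
is not an integer multiple of `π`. -/
def Admissible {n : ℕ} (θ : Fin n → ℝ) : Prop :=
  ∀ j k, j ≠ k → ∀ m : ℤ, θ j - θ k ≠ m * Real.pi

/-!
Write `(c, s) = (cos θ, sin θ)`, so that `c_θ(x) = x² γ(x)` with `γ(x) = (c, s) + x (-s, c)`, and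
for `ξ = (P, Q)` put `F = yP - xQ`, `G = xP + yQ`. Since `P ∘ c_θ = x^(2i) P ∘ γ`, the lifting
condition forces `x^(2i-1) ∣ η`; eliminating `η` leaves `x² ∣ x G(γ) + 2 F(γ)`, i.e. `F` and
`G + 2 D F` vanish at `(c, s)`, where `D = x ∂_y - y ∂_x` is the rotation field. Both are binary
forms of degree `i + 1` vanishing on `i + 1` distinct lines, hence multiples `α Π` and `β Π` of the
product `Π` of the linear forms of these lines. At the isotropic point `(1, ω)`, `ω² = -1`, the
form `xG + yF = (x² + y²) P` vanishes and Euler's identity turns `D` into multiplication by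
`-(i + 1) ω`; this gives `β = -(2i + 3) α ω` in `K[ω]`, so `α = β = 0`, then `F = G = 0` and
`P = Q = 0`.
-/

namespace MvPolynomial

section General

variable {σ R : Type*} [CommSemiring R]

theorem IsHomogeneous.aeval_smul {S : Type*} [CommSemiring S] [Algebra R S]
    {φ : MvPolynomial σ R} {n : ℕ} (hφ : φ.IsHomogeneous n) (r : S) (g : σ → S) :
    MvPolynomial.aeval (r • g) φ = r ^ n * MvPolynomial.aeval g φ := by
  conv_lhs => rw [φ.as_sum]
  conv_rhs => rw [φ.as_sum]
  rw [map_sum, map_sum, Finset.mul_sum]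
  refine Finset.sum_congr rfl fun d hd => ?_
  simp only [aeval_monomial, Pi.smul_apply, smul_eq_mul, mul_pow, Finsupp.prod,
    Finset.prod_mul_distrib, Finset.prod_pow_eq_pow_sum, hφ.degree_eq_sum_deg_support hd]
  ring

theorem coeff_zero_aeval_C_add_C_mul_X (p q : σ → R) (φ : MvPolynomial σ R) :
    (aeval (fun j => Polynomial.C (p j) + Polynomial.C (q j) * Polynomial.X) φ).coeff 0 =
      eval p φ := by
  rw [coeff_zero_eq_eval_zero, ← Polynomial.coe_aeval_eq_eval, ← AlgHom.comp_apply, comp_aeval]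
  simp

theorem coeff_one_aeval_C_add_C_mul_X [Fintype σ] (p q : σ → R) (φ : MvPolynomial σ R) :
    (aeval (fun j => Polynomial.C (p j) + Polynomial.C (q j) * Polynomial.X) φ).coeff 1 =
      ∑ j, q j * eval p (pderiv j φ) := by
  classical
  induction φ using MvPolynomial.induction_on with
  | C a => simp
  | add φ ψ hφ hψ => simp [hφ, hψ, mul_add, Finset.sum_add_distrib]
  | mul_X φ j h =>
    rw [map_mul, aeval_X, mul_add, ← mul_assoc, Polynomial.coeff_add, Polynomial.coeff_mul_C,
      Polynomial.coeff_mul_X, Polynomial.coeff_mul_C, h, coeff_zero_aeval_C_add_C_mul_X]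
    simp only [Derivation.leibniz, pderiv_X, smul_eq_mul, map_add, map_mul, eval_X,
      Pi.single_apply]
    simp only [Finset.sum_mul, MonoidWithZeroHom.map_ite_one_zero, mul_ite, mul_one, mul_zero,
      mul_add, Finset.sum_add_distrib, Finset.sum_ite_eq, Finset.mem_univ, ↓reduceIte]
    rw [add_comm, mul_comm]
    exact congrArg _ (Finset.sum_congr rfl fun _ _ => by ring)

end General

section LineForm

variable {K : Type*} [Field K] {c s : K}

noncomputable def lineForm (c s : K) : MvPolynomial (Fin 2) K := C s * X 0 - C c * X 1

@[simp]
theorem eval_lineForm (c s a b : K) : eval ![a, b] (lineForm c s) = s * a - c * b := by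
  simp [lineForm]

theorem isHomogeneous_lineForm (c s : K) : (lineForm c s).IsHomogeneous 1 :=
  (isHomogeneous_C_mul_X _ _).sub (isHomogeneous_C_mul_X _ _)

theorem lineForm_ne_zero (hcs : c ^ 2 + s ^ 2 = 1) : lineForm c s ≠ 0 := fun h => by
  have h' := congrArg (eval ![s, -c]) h
  simp only [eval_lineForm, map_zero] at h'
  exact one_ne_zero (by linear_combination h' - hcs)

theorem irreducible_lineForm (hcs : c ^ 2 + s ^ 2 = 1) : Irreducible (lineForm c s) := by
  refine irreducible_of_totalDegree_eq_one
    ((isHomogeneous_lineForm c s).totalDegree (lineForm_ne_zero hcs)) fun x hx => ?_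
  refine isUnit_iff_ne_zero.mpr fun hx0 => lineForm_ne_zero hcs (MvPolynomial.ext _ _ fun m => ?_)
  simpa [hx0] using hx m

/-- Modulo `lineForm c s` we have `X₀ ≡ c M` and `X₁ ≡ s M` with `M = c X₀ + s X₁`, so
`H ≡ M ^ n * H(c, s)`. -/
theorem lineForm_dvd_of_eval_eq_zero (hcs : c ^ 2 + s ^ 2 = 1) {H : MvPolynomial (Fin 2) K}
    {n : ℕ} (hH : H.IsHomogeneous n) (h : eval ![c, s] H = 0) : lineForm c s ∣ H := by
  set π := Ideal.Quotient.mkₐ K (Ideal.span {lineForm c s})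
  have hπ : π (lineForm c s) = 0 := Ideal.Quotient.eq_zero_iff_dvd _ _ |>.mpr dvd_rfl
  set M : MvPolynomial (Fin 2) K := C c * X 0 + C s * X 1
  have hX : (fun j => π (X j)) = π M • (algebraMap K _ ∘ ![c, s]) := by
    have hC : (C c : MvPolynomial (Fin 2) K) ^ 2 + C s ^ 2 = 1 := by
      rw [← map_pow, ← map_pow, ← map_add, hcs, map_one]
    have h0 : X 0 = M * C c + lineForm c s * C s := by
      simp only [M, lineForm]; linear_combination (-X 0) * hC
    have h1 : X 1 = M * C s - lineForm c s * C c := by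
      simp only [M, lineForm]; linear_combination (-X 1) * hC
    funext j
    fin_cases j
    · simp [h0, hπ]
    · simp [h1, hπ]
  rw [← Ideal.Quotient.eq_zero_iff_dvd]
  calc Ideal.Quotient.mk _ H = π (aeval X H) := by rw [aeval_X_left_apply]; rfl
    _ = aeval (fun j => π (X j)) H := by rw [← AlgHom.comp_apply, comp_aeval]
    _ = 0 := by
      rw [hX, hH.aeval_smul, aeval_algebraMap_apply]
      simp [h]

variable {ι : Type*} [Fintype ι] {c s : ι → K}

theorem prod_lineForm_dvd (hcs : ∀ k, c k ^ 2 + s k ^ 2 = 1)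
    (hdet : ∀ j k, j ≠ k → s j * c k - c j * s k ≠ 0) {H : MvPolynomial (Fin 2) K} {n : ℕ}
    (hH : H.IsHomogeneous n) (h : ∀ k, eval ![c k, s k] H = 0) :
    ∏ k, lineForm (c k) (s k) ∣ H := by
  refine Fintype.prod_dvd_of_isRelPrime (fun j k hjk => ?_)
    fun k => lineForm_dvd_of_eval_eq_zero (hcs k) hH (h k)
  refine (irreducible_lineForm (hcs j)).isRelPrime_iff_not_dvd.mpr
    fun ⟨W, hW⟩ => hdet k j hjk.symm ?_
  have h' := congrArg (eval ![c j, s j]) hW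
  simp only [eval_lineForm, map_mul] at h'
  linear_combination h'

theorem exists_eq_C_mul_prod_lineForm (hcs : ∀ k, c k ^ 2 + s k ^ 2 = 1)
    (hdet : ∀ j k, j ≠ k → s j * c k - c j * s k ≠ 0) {H : MvPolynomial (Fin 2) K}
    (hH : H.IsHomogeneous (Fintype.card ι)) (h : ∀ k, eval ![c k, s k] H = 0) :
    ∃ α : K, H = C α * ∏ k, lineForm (c k) (s k) := by
  obtain ⟨W, rfl⟩ := prod_lineForm_dvd hcs hdet hH h
  refine ⟨coeff 0 W, ?_⟩
  rcases eq_or_ne W 0 with rfl | hW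
  · simp
  have hprod : (∏ k, lineForm (c k) (s k)).IsHomogeneous (Fintype.card ι) := by
    have h := IsHomogeneous.prod _ _ _ fun k (_ : k ∈ Finset.univ) =>
      isHomogeneous_lineForm (c k) (s k)
    rwa [Finset.sum_const, smul_eq_mul, mul_one, Finset.card_univ] at h
  have hprod0 : ∏ k, lineForm (c k) (s k) ≠ 0 :=
    Finset.prod_ne_zero_iff.mpr fun k _ => lineForm_ne_zero (hcs k)
  have hW0 : W.totalDegree = 0 := by
    have := totalDegree_mul_of_isDomain hprod0 hW
    rw [hH.totalDegree (mul_ne_zero hprod0 hW), hprod.totalDegree hprod0] at this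
    omega
  conv_lhs => rw [totalDegree_eq_zero_iff_eq_C.mp hW0]
  ring

end LineForm

section RotationDeriv

variable {R : Type*} [CommRing R]

noncomputable def rotationDeriv (H : MvPolynomial (Fin 2) R) : MvPolynomial (Fin 2) R :=
  X 0 * pderiv 1 H - X 1 * pderiv 0 H

theorem IsHomogeneous.rotationDeriv {H : MvPolynomial (Fin 2) R} {n : ℕ}
    (hH : H.IsHomogeneous n) : (rotationDeriv H).IsHomogeneous n := by
  rcases n with _ | n
  · rw [← totalDegree_zero_iff_isHomogeneous, totalDegree_eq_zero_iff_eq_C] at hH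
    rw [hH]
    simpa [MvPolynomial.rotationDeriv] using isHomogeneous_zero _ _ _
  · have h := ((isHomogeneous_X R 0).mul (hH.pderiv (i := 1))).sub
      ((isHomogeneous_X R 1).mul (hH.pderiv (i := 0)))
    rwa [add_tsub_cancel_right, add_comm] at h

variable {A : Type*} [CommRing A] [Algebra R A] {z : A}

theorem IsHomogeneous.aeval_rotationDeriv (hz : z ^ 2 = -1) {H : MvPolynomial (Fin 2) R}
    {n : ℕ} (hH : H.IsHomogeneous n) :
    MvPolynomial.aeval ![1, z] (MvPolynomial.rotationDeriv H) =
      -((n : A) * z) * MvPolynomial.aeval ![1, z] H := by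
  have h := congrArg (MvPolynomial.aeval ![1, z]) hH.sum_X_mul_pderiv
  simp only [Fin.sum_univ_two, map_add, map_mul, aeval_X, Matrix.cons_val_zero, one_mul,
    Matrix.cons_val_one, Matrix.cons_val_fin_one, nsmul_eq_mul, map_natCast] at h
  simp only [MvPolynomial.rotationDeriv, map_sub, map_mul, aeval_X, Matrix.cons_val_zero, one_mul,
    Matrix.cons_val_one, Matrix.cons_val_fin_one]
  linear_combination (-z) * h + MvPolynomial.aeval ![1, z] (pderiv 1 H) * hz

theorem aeval_X_mul_add_X_mul (hz : z ^ 2 = -1) (P Q : MvPolynomial (Fin 2) R) :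
    aeval ![1, z] (X 0 * P + X 1 * Q) = -z * aeval ![1, z] (X 1 * P - X 0 * Q) := by
  simp only [map_add, map_sub, map_mul, aeval_X, Matrix.cons_val_zero, Matrix.cons_val_one,
    Matrix.cons_val_fin_one]
  linear_combination aeval ![1, z] P * hz

theorem eq_zero_of_X_mul_sub_X_mul_eq_zero [IsDomain R] {P Q : MvPolynomial (Fin 2) R}
    (hF : X 1 * P - X 0 * Q = 0) (hG : X 0 * P + X 1 * Q = 0) : P = 0 ∧ Q = 0 := by
  have hsq : (X 0 ^ 2 + X 1 ^ 2 : MvPolynomial (Fin 2) R) ≠ 0 := fun h0 => by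
    simpa using congrArg (eval ![1, 0]) h0
  exact ⟨mul_left_cancel₀ hsq (by linear_combination X 0 * hG + X 1 * hF),
    mul_left_cancel₀ hsq (by linear_combination X 1 * hG - X 0 * hF)⟩

end RotationDeriv

section Multicusp

open QuadraticAlgebra

variable {K : Type*} [Field K]

theorem isUnit_aeval_omega_lineForm {c s : K} (hcs : c ^ 2 + s ^ 2 = 1) :
    IsUnit (aeval ![1, ω] (lineForm c s) : QuadraticAlgebra K (-1) 0) := by
  have h : aeval ![1, ω] (lineForm c s) = (⟨s, -c⟩ : QuadraticAlgebra K (-1) 0) := by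
    ext <;> simp [lineForm]
  rw [h, isUnit_iff_norm_isUnit, isUnit_iff_ne_zero, norm_def]
  exact fun h0 => one_ne_zero (by linear_combination h0 - hcs)

variable {ι : Type*} [Fintype ι] {c s : ι → K}

theorem eq_zero_of_forall_eval_rotationDeriv_eq_zero [CharZero K] {n : ℕ}
    (hcard : Fintype.card ι = n + 1) (hcs : ∀ k, c k ^ 2 + s k ^ 2 = 1)
    (hdet : ∀ j k, j ≠ k → s j * c k - c j * s k ≠ 0)
    {P Q : MvPolynomial (Fin 2) K} (hP : P.IsHomogeneous n) (hQ : Q.IsHomogeneous n)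
    (h : ∀ k, eval ![c k, s k] (X 1 * P - X 0 * Q) = 0 ∧
      eval ![c k, s k] (X 0 * P + X 1 * Q + 2 * rotationDeriv (X 1 * P - X 0 * Q)) = 0) :
    P = 0 ∧ Q = 0 := by
  set F := X 1 * P - X 0 * Q with hFdef
  set G := X 0 * P + X 1 * Q with hGdef
  have hF : F.IsHomogeneous (n + 1) := by
    rw [add_comm]; exact ((isHomogeneous_X K 1).mul hP).sub ((isHomogeneous_X K 0).mul hQ)
  have hG : G.IsHomogeneous (n + 1) := by
    rw [add_comm]; exact ((isHomogeneous_X K 0).mul hP).add ((isHomogeneous_X K 1).mul hQ)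
  have hR : (G + 2 * rotationDeriv F).IsHomogeneous (n + 1) :=
    hG.add (by rw [← map_ofNat C 2]; exact hF.rotationDeriv.C_mul 2)
  obtain ⟨α, hα⟩ := exists_eq_C_mul_prod_lineForm hcs hdet (hcard ▸ hF) fun k => (h k).1
  obtain ⟨β, hβ⟩ := exists_eq_C_mul_prod_lineForm hcs hdet (hcard ▸ hR) fun k => (h k).2
  -- `1, ω` stay linearly independent over `K` even when `K` already contains `√-1`.
  set e := aeval (R := K) ![(1 : QuadraticAlgebra K (-1) 0), ω] with he
  have hω : (ω : QuadraticAlgebra K (-1) 0) ^ 2 = -1 := by ext <;> simp [sq]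
  have heR : e (G + 2 * rotationDeriv F) =
      -((2 * (n : QuadraticAlgebra K (-1) 0) + 3) * ω) * e F := by
    rw [map_add, map_mul, hF.aeval_rotationDeriv hω, aeval_X_mul_add_X_mul hω, ← he, map_ofNat]
    push_cast
    ring
  have hunit : IsUnit (e (∏ k, lineForm (c k) (s k))) := by
    rw [map_prod]
    exact IsUnit.prod_iff.mpr fun k _ => isUnit_aeval_omega_lineForm (hcs k)
  have hαβ : algebraMap K _ β +
      (2 * (n : QuadraticAlgebra K (-1) 0) + 3) * ω * algebraMap K _ α = 0 := by
    rw [hβ, hα, map_mul, map_mul, aeval_C, aeval_C] at heR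
    exact hunit.mul_left_cancel (by linear_combination heR)
  have hβ0 : β = 0 := by simpa using congrArg QuadraticAlgebra.re hαβ
  have hα0 : α = 0 := by
    have h23 : (2 * n + 3 : K) = 0 ∨ α = 0 := by simpa using congrArg QuadraticAlgebra.im hαβ
    exact h23.resolve_left (by exact_mod_cast (by omega : 2 * n + 3 ≠ 0))
  have hF0 : F = 0 := by rw [hα, hα0, C_0, zero_mul]
  have hG0 : G = 0 := by simpa [hF0, hβ0, MvPolynomial.rotationDeriv] using hβ
  exact eq_zero_of_X_mul_sub_X_mul_eq_zero hF0 hG0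

end Multicusp

end MvPolynomial

theorem X_sq_dvd_of_liftable {K : Type*} [Field K] [CharZero K] {c s : K}
    (hcs : c ^ 2 + s ^ 2 = 1) {m : ℕ} {p q η : K[X]}
    (h1 : X ^ (m + 2) ∣ X ^ m * p - η * (C c * (2 * X) - C s * (3 * X ^ 2)))
    (h2 : X ^ (m + 2) ∣ X ^ m * q - η * (C s * (2 * X) + C c * (3 * X ^ 2))) :
    X ^ 2 ∣ X * ((C c - C s * X) * p + (C s + C c * X) * q) +
      2 * ((C s + C c * X) * p - (C c - C s * X) * q) := by
  set A := X ^ m * p - η * (C c * (2 * X) - C s * (3 * X ^ 2))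
  set B := X ^ m * q - η * (C s * (2 * X) + C c * (3 * X ^ 2))
  have hC : (C c : K[X]) ^ 2 + C s ^ 2 = 1 := by
    rw [← map_pow, ← map_pow, ← map_add, hcs, map_one]
  -- `c A + s B = x^m (c p + s q) - 2 x η`, while the multipliers below leave only `3 x⁴ η`.
  have hη : X ^ m ∣ X * η := by
    have h : X ^ m ∣ X ^ m * (C c * p + C s * q) - (C c * A + C s * B) :=
      dvd_sub (dvd_mul_right _ _) (dvd_add (((pow_dvd_pow X (by omega)).trans h1).mul_left _)
        (((pow_dvd_pow X (by omega)).trans h2).mul_left _))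
    rw [show X ^ m * (C c * p + C s * q) - (C c * A + C s * B) = C 2 * (X * η) by
      rw [map_ofNat]; linear_combination (2 * X * η) * hC] at h
    exact (isUnit_C.mpr (IsUnit.mk0 (2 : K) two_ne_zero)).dvd_mul_left.mp h
  have h3 : X ^ (m + 2) ∣ 3 * (X ^ 3 * (X * η)) :=
    Dvd.dvd.mul_left ((pow_dvd_pow X (by omega : m + 2 ≤ 3 + m)).trans
      (by rw [pow_add]; exact mul_dvd_mul_left _ hη)) _
  have h : X ^ m * X ^ 2 ∣ X ^ m * (X * ((C c - C s * X) * p + (C s + C c * X) * q) +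
      2 * ((C s + C c * X) * p - (C c - C s * X) * q)) := by
    rw [← pow_add, show X ^ m * (X * ((C c - C s * X) * p + (C s + C c * X) * q) +
        2 * ((C s + C c * X) * p - (C c - C s * X) * q)) =
        (X * (C c - C s * X) + 2 * (C s + C c * X)) * A +
          (X * (C s + C c * X) - 2 * (C c - C s * X)) * B + 3 * (X ^ 3 * (X * η)) by
      linear_combination 3 * X ^ 4 * η * hC]
    exact dvd_add (dvd_add (h1.mul_left _) (h2.mul_left _)) h3
  exact (mul_dvd_mul_iff_left (pow_ne_zero m X_ne_zero)).mp h

section Cusp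

variable {K : Type*} [RCLike K]

-- `R_θ (1, x)`
noncomputable def cuspDir (K : Type*) [RCLike K] (θ : ℝ) : Fin 2 → K[X] :=
  fun j => C (![(Real.cos θ : K), Real.sin θ] j) + C (![-(Real.sin θ : K), Real.cos θ] j) * X

theorem cusp_eq_X_sq_smul_cuspDir (θ : ℝ) :
    ![cusp1 K θ, cusp2 K θ] = (X ^ 2 : K[X]) • cuspDir K θ := by
  funext j
  fin_cases j <;>
    simp only [cusp1, cusp2, cuspDir, Fin.zero_eta, Fin.mk_one, Fin.isValue, Matrix.cons_val_zero,
      Matrix.cons_val_one, Matrix.cons_val_fin_one, Pi.smul_apply, map_neg, neg_mul,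
      smul_eq_mul] <;>
    ring

theorem coeff_zero_aeval_cuspDir (θ : ℝ) (H : MvPolynomial (Fin 2) K) :
    (MvPolynomial.aeval (cuspDir K θ) H).coeff 0 =
      MvPolynomial.eval ![(Real.cos θ : K), Real.sin θ] H :=
  MvPolynomial.coeff_zero_aeval_C_add_C_mul_X _ _ H

theorem coeff_one_aeval_cuspDir (θ : ℝ) (H : MvPolynomial (Fin 2) K) :
    (MvPolynomial.aeval (cuspDir K θ) H).coeff 1 =
      MvPolynomial.eval ![(Real.cos θ : K), Real.sin θ] (MvPolynomial.rotationDeriv H) := by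
  refine (MvPolynomial.coeff_one_aeval_C_add_C_mul_X _ _ H).trans ?_
  simp only [Fin.sum_univ_two, Fin.isValue, Matrix.cons_val_zero, neg_mul, Matrix.cons_val_one,
    Matrix.cons_val_fin_one, MvPolynomial.rotationDeriv, map_sub, map_mul, MvPolynomial.eval_X]
  ring

theorem LiftTang.X_sq_dvd {i : ℕ} {θ : ℝ} {P Q : MvPolynomial (Fin 2) K}
    (hP : P.IsHomogeneous i) (hQ : Q.IsHomogeneous i) (h : LiftTang K i θ (P, Q)) :
    (X ^ 2 : K[X]) ∣
      X * MvPolynomial.aeval (cuspDir K θ) (MvPolynomial.X 0 * P + MvPolynomial.X 1 * Q) +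
        2 * MvPolynomial.aeval (cuspDir K θ) (MvPolynomial.X 1 * P - MvPolynomial.X 0 * Q) := by
  obtain ⟨η, h1, h2⟩ := h
  simp only [cuspEval, cusp_eq_X_sq_smul_cuspDir, hP.aeval_smul, hQ.aeval_smul, ← pow_mul,
    dcusp1, dcusp2] at h1 h2
  have hu : cuspDir K θ 0 = C (Real.cos θ : K) - C (Real.sin θ : K) * X := by
    simp [cuspDir, sub_eq_add_neg]
  have hv : cuspDir K θ 1 = C (Real.sin θ : K) + C (Real.cos θ : K) * X := by simp [cuspDir]
  simp only [map_add, map_sub, map_mul, MvPolynomial.aeval_X, hu, hv]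
  exact X_sq_dvd_of_liftable (by exact_mod_cast Real.cos_sq_add_sin_sq θ) h1 h2

theorem LiftTang.eval_eq_zero {i : ℕ} {θ : ℝ} {P Q : MvPolynomial (Fin 2) K}
    (hP : P.IsHomogeneous i) (hQ : Q.IsHomogeneous i) (h : LiftTang K i θ (P, Q)) :
    MvPolynomial.eval ![(Real.cos θ : K), Real.sin θ]
        (MvPolynomial.X 1 * P - MvPolynomial.X 0 * Q) = 0 ∧
      MvPolynomial.eval ![(Real.cos θ : K), Real.sin θ]
        (MvPolynomial.X 0 * P + MvPolynomial.X 1 * Q +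
          2 * MvPolynomial.rotationDeriv (MvPolynomial.X 1 * P - MvPolynomial.X 0 * Q)) = 0 := by
  have hc := X_pow_dvd_iff.mp (h.X_sq_dvd hP hQ)
  have h0 := hc 0 (by norm_num)
  have h1 := hc 1 (by norm_num)
  simp only [coeff_add, coeff_X_mul_zero, coeff_X_mul, coeff_ofNat_mul, zero_add,
    coeff_zero_aeval_cuspDir, coeff_one_aeval_cuspDir] at h0 h1
  refine ⟨(mul_eq_zero.mp h0).resolve_left two_ne_zero, ?_⟩
  rw [map_add, map_mul, map_ofNat]
  exact h1

end Cusp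

theorem Admissible.sin_sub_ne_zero {n : ℕ} {θ : Fin n → ℝ} (hθ : Admissible θ) {j k : Fin n}
    (hjk : j ≠ k) : Real.sin (θ j - θ k) ≠ 0 := fun h => by
  obtain ⟨m, hm⟩ := Real.sin_eq_zero_iff.mp h
  exact hθ j k hjk m hm.symm

theorem multicusp_KSM_injective_general (K : Type*) [RCLike K] (i : ℕ)
    (θ : Fin (i + 1) → ℝ) (hθ : Admissible θ)
    (ξ : MvPolynomial (Fin 2) K × MvPolynomial (Fin 2) K) (hξ : ξ ∈ Vsp K i)
    (h : ∀ k, LiftTang K i (θ k) ξ) : ξ = 0 := by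
  obtain ⟨P, Q⟩ := ξ
  obtain ⟨hP, hQ⟩ := hξ
  have hcs : ∀ k, (Real.cos (θ k) : K) ^ 2 + (Real.sin (θ k) : K) ^ 2 = 1 := fun k => by
    exact_mod_cast Real.cos_sq_add_sin_sq (θ k)
  have hdet : ∀ j k, j ≠ k →
      (Real.sin (θ j) : K) * Real.cos (θ k) - Real.cos (θ j) * Real.sin (θ k) ≠ 0 :=
    fun j k hjk => by exact_mod_cast Real.sin_sub (θ j) (θ k) ▸ hθ.sin_sub_ne_zero hjk
  obtain ⟨rfl, rfl⟩ := MvPolynomial.eq_zero_of_forall_eval_rotationDeriv_eq_zero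
    (Fintype.card_fin _) hcs hdet hP hQ fun k => (h k).eval_eq_zero hP hQ
  rfl

/-- Injectivity of the `i`-th reduced Kodaira–Spencer–Mather map of the multicusp
`c_(θ₀,…,θ_i)` for `i ≥ 1`: if `ξ ∈ V_i` is `i`-liftably tangent to every branch `c_{θ_k}`,
then `ξ = 0`. -/
theorem multicusp_KSM_injective (K : Type*) [RCLike K] (i : ℕ) (hi : 1 ≤ i)
    (θ : Fin (i + 1) → ℝ) (hθ : Admissible θ)
    (ξ : MvPolynomial (Fin 2) K × MvPolynomial (Fin 2) K) (hξ : ξ ∈ Vsp K i)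
    (h : ∀ k, LiftTang K i (θ k) ξ) : ξ = 0 :=
  multicusp_KSM_injective_general K i θ hθ ξ hξ h
end

section
/- Let i ≥ 1 be an integer and let θ₀, …, θ_i be an admissible family of real angles (θ_j − θ_k ∉ πℤ for all j ≠ k). Then for every family of pairs of polynomials (A_k, B_k) ∈ K[x] × K[x], k = 0, …, i, such that x^{2i} divides each A_k and each B_k, there exist a pair ξ = (P, Q) of homogeneous degree-i polynomials in K[X, Y] and polynomials η₀, …, η_i ∈ K[x] such that for every k ∈ {0, …, i}, x^{2i+2} divides both A_k(x) − P(c_{θ_k}(x)) − η_k(x)·(2x cos θ_k − 3x² sin θ_k) and B_k(x) − Q(c_{θ_k}(x)) − η_k(x)·(2x sin θ_k + 3x² cos θ_k) in K[x]. (Equivalently, the i-th reduced Kodaira–Spencer–Mather map ᵢω̄ of the multicusp c_{(θ₀, …, θ_i)} is surjective; combined with injectivity this is the paper's Corollary 1 that ᵢω̄c_{(θ₀,…,θ_i)} is bijective.) -/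
open Polynomial

/-!
Modulo `x^(2i+2)` and the tangent space `η·c_θ'`, a pair divisible by `x^(2i)` on the branch
`c_θ` is determined by two numbers (`normalJet`), so the theorem says that
`(P, Q) ↦ (normalJet of (P, Q) ∘ c_{θ_k})_k` maps the pairs of degree-`i` forms onto
`(K × K)^(i+1)`. Let `G_k` be the product of the linear forms vanishing on the tangent lines of
the other `i` branches and `π_k = ∏_{j ≠ k} sin (θ_j - θ_k)`, nonzero by admissibility.
The field `G_k · (cos θ_k, sin θ_k)` has jets `-2σ - π_k e_k`, where `e_k` is the second unit
vector at branch `k` and `σ = ∑_b π_b e_b`; summing over `k` gives `-(2i+3)σ`, so `σ` and then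
every `e_k` lie in the image. The field `G_k · (-sin θ_k, cos θ_k)` has first jet coordinate
`π_k` at branch `k` and `0` elsewhere, which gives the first unit vectors.
-/

theorem MvPolynomial.IsHomogeneous.pow_dvd_aeval {σ R S : Type*} [CommSemiring R]
    [CommSemiring S] [Algebra R S] {P : MvPolynomial σ R} {n : ℕ} (hP : P.IsHomogeneous n)
    {a : S} {x : σ → S} (hx : ∀ j, a ∣ x j) : a ^ n ∣ MvPolynomial.aeval x P := by
  have hmem : MvPolynomial.eval x (MvPolynomial.map (algebraMap R S) P) ∈
      Ideal.span (Set.range x) ^ n :=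
    (Ideal.mem_span_pow_iff_exists_isHomogeneous x _).mpr ⟨_, hP.map _, rfl⟩
  have hle : Ideal.span (Set.range x) ≤ Ideal.span {a} := by
    rw [Ideal.span_le]
    rintro _ ⟨j, rfl⟩
    exact Ideal.mem_span_singleton.mpr (hx j)
  rw [MvPolynomial.aeval_def, MvPolynomial.eval₂_eq_eval_map, ← Ideal.mem_span_singleton,
    ← Ideal.span_singleton_pow]
  exact Ideal.pow_right_mono hle n hmem

theorem Polynomial.X_pow_add_two_dvd_sub_coeff {R : Type*} [Ring R] {p : R[X]} {n : ℕ}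
    (hp : X ^ n ∣ p) :
    X ^ (n + 2) ∣ p - (C (p.coeff n) * X ^ n + C (p.coeff (n + 1)) * X ^ (n + 1)) := by
  rw [X_pow_dvd_iff] at hp ⊢
  intro d hd
  simp only [coeff_sub, coeff_add, coeff_C_mul, coeff_X_pow]
  rcases lt_or_ge d n with hdn | hdn
  · simp [hp d hdn, hdn.ne, (hdn.trans (Nat.lt_succ_self n)).ne]
  · obtain rfl | rfl : d = n ∨ d = n + 1 := by omega
    all_goals simp

theorem Pi.eq_sum_smul_single_fst_add_sum_smul_single_snd {ι R : Type*} [Fintype ι]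
    [DecidableEq ι] [Semiring R] (τ : ι → R × R) :
    τ = ∑ b, (τ b).1 • (Pi.single b (1, 0) : ι → R × R)
      + ∑ b, (τ b).2 • (Pi.single b (0, 1) : ι → R × R) := by
  funext b
  ext <;> simp [Finset.sum_apply, Pi.single_apply]

section Cusp

variable {K : Type*} [RCLike K]

theorem X_pow_dvd_cuspEval {n : ℕ} {P : MvPolynomial (Fin 2) K} (hP : P.IsHomogeneous n)
    (t : ℝ) : (X : K[X]) ^ (2 * n) ∣ cuspEval K t P := by
  rw [pow_mul]
  refine hP.pow_dvd_aeval (Fin.forall_fin_two.mpr ⟨?_, ?_⟩)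
  · exact ⟨C (Real.cos t : K) - C (Real.sin t : K) * X, by
      rw [Matrix.cons_val_zero, cusp1]; ring⟩
  · exact ⟨C (Real.sin t : K) + C (Real.cos t : K) * X, by
      rw [Matrix.cons_val_one, Matrix.cons_val_fin_one, cusp2]; ring⟩

theorem cuspEval_C_mul (t : ℝ) (a : K) (P : MvPolynomial (Fin 2) K) :
    cuspEval K t (MvPolynomial.C a * P) = C a * cuspEval K t P := by
  simp [cuspEval, Polynomial.algebraMap_eq]

variable (K) in
noncomputable def lineForm (a : ℝ) : MvPolynomial (Fin 2) K :=
  MvPolynomial.C (Real.sin a : K) * MvPolynomial.X 0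
    - MvPolynomial.C (Real.cos a : K) * MvPolynomial.X 1

theorem lineForm_isHomogeneous (a : ℝ) : (lineForm K a).IsHomogeneous 1 :=
  (MvPolynomial.isHomogeneous_C_mul_X _ _).sub (MvPolynomial.isHomogeneous_C_mul_X _ _)

theorem cuspEval_lineForm (t a : ℝ) :
    cuspEval K t (lineForm K a) =
      X ^ 2 * (C (Real.sin (a - t) : K) - C (Real.cos (a - t) : K) * X) := by
  simp only [cuspEval, lineForm, cusp1, cusp2, map_sub, map_mul, MvPolynomial.aeval_C,
    MvPolynomial.aeval_X, Polynomial.algebraMap_eq, Matrix.cons_val_zero, Matrix.cons_val_one,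
    Real.sin_sub, Real.cos_sub, map_add]
  ring

theorem cuspEval_prod_lineForm {ι : Type*} (s : Finset ι) (θ : ι → ℝ) (t : ℝ) :
    cuspEval K t (∏ j ∈ s, lineForm K (θ j)) =
      X ^ (2 * s.card) *
        ∏ j ∈ s, (C (Real.sin (θ j - t) : K) - C (Real.cos (θ j - t) : K) * X) :=
  calc cuspEval K t (∏ j ∈ s, lineForm K (θ j))
      = ∏ j ∈ s, cuspEval K t (lineForm K (θ j)) := map_prod _ _ _
    _ = _ := by
      simp only [cuspEval_lineForm, Finset.prod_mul_distrib, Finset.prod_const, ← pow_mul]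

variable (K) in
/-- On pairs divisible by `x^n` (`n ≥ 1`), the kernel of this map is the tangent space
`{η · c_t'}` modulo `x^(n+2)`: its coordinates are the normal component of the `x^n`-coefficient,
and twice the normal component of the `x^(n+1)`-coefficient minus three times the tangential
component of the `x^n`-coefficient. -/
noncomputable def normalJet (n : ℕ) (t : ℝ) : K[X] × K[X] →ₗ[K] K × K where
  toFun pq :=
    (-(Real.sin t : K) * pq.1.coeff n + (Real.cos t : K) * pq.2.coeff n,
      2 * (-(Real.sin t : K) * pq.1.coeff (n + 1) + (Real.cos t : K) * pq.2.coeff (n + 1))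
        - 3 * ((Real.cos t : K) * pq.1.coeff n + (Real.sin t : K) * pq.2.coeff n))
  map_add' _ _ := by
    simp only [Prod.fst_add, Prod.snd_add, coeff_add, Prod.mk_add_mk]
    congr 1 <;> ring
  map_smul' _ _ := by
    simp only [Prod.smul_fst, Prod.smul_snd, coeff_smul, smul_eq_mul, RingHom.id_apply,
      Prod.smul_mk]
    congr 1 <;> ring

theorem exists_tangent_of_normalJet_eq_zero {n : ℕ} (hn : 1 ≤ n) (t : ℝ) {p q : K[X]}
    (hp : X ^ n ∣ p) (hq : X ^ n ∣ q) (h : normalJet K n t (p, q) = 0) :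
    ∃ η : K[X], X ^ (n + 2) ∣ p - η * dcusp1 K t ∧ X ^ (n + 2) ∣ q - η * dcusp2 K t := by
  obtain ⟨m, rfl⟩ : ∃ m, n = m + 1 := ⟨n - 1, by omega⟩
  set s : K := ((Real.sin t : ℝ) : K)
  set c : K := ((Real.cos t : ℝ) : K)
  have hsc : s ^ 2 + c ^ 2 = 1 := by
    simp only [s, c]; exact_mod_cast Real.sin_sq_add_cos_sq t
  obtain ⟨h₀, h₁⟩ := Prod.mk_eq_zero.mp h
  change -s * p.coeff (m + 1) + c * q.coeff (m + 1) = 0 at h₀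
  change 2 * (-s * p.coeff (m + 2) + c * q.coeff (m + 2))
    - 3 * (c * p.coeff (m + 1) + s * q.coeff (m + 1)) = 0 at h₁
  set α := (c * p.coeff (m + 1) + s * q.coeff (m + 1)) / 2
  set β := (c * p.coeff (m + 2) + s * q.coeff (m + 2)) / 2
  have hp₀ : p.coeff (m + 1) = 2 * c * α := by
    simp only [α]; linear_combination (-s) * h₀ - p.coeff (m + 1) * hsc
  have hp₁ : p.coeff (m + 2) = 2 * c * β - 3 * s * α := by
    simp only [α, β]; linear_combination (-s / 2) * h₁ - p.coeff (m + 2) * hsc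
  have hq₀ : q.coeff (m + 1) = 2 * s * α := by
    simp only [α]; linear_combination c * h₀ - q.coeff (m + 1) * hsc
  have hq₁ : q.coeff (m + 2) = 2 * s * β + 3 * c * α := by
    simp only [α, β]; linear_combination (c / 2) * h₁ - q.coeff (m + 2) * hsc
  refine ⟨C α * X ^ m + C β * X ^ (m + 1), ?_, ?_⟩
  · convert (X_pow_add_two_dvd_sub_coeff hp).add (dvd_mul_right (X ^ (m + 3)) (C (3 * s * β)))
      using 1
    rw [hp₀, hp₁]
    simp only [dcusp1, map_mul, map_sub, map_ofNat]
    ring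
  · convert (X_pow_add_two_dvd_sub_coeff hq).sub (dvd_mul_right (X ^ (m + 3)) (C (3 * c * β)))
      using 1
    rw [hq₀, hq₁]
    simp only [dcusp2, map_mul, map_add, map_ofNat]
    ring

variable (K) in
noncomputable def directionField (a : ℝ) (G : MvPolynomial (Fin 2) K) :
    MvPolynomial (Fin 2) K × MvPolynomial (Fin 2) K :=
  (MvPolynomial.C (Real.cos a : K) * G, MvPolynomial.C (Real.sin a : K) * G)

theorem directionField_mem_Vsp {i : ℕ} {G : MvPolynomial (Fin 2) K} (hG : G.IsHomogeneous i)
    (a : ℝ) : directionField K a G ∈ Vsp K i :=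
  Submodule.mem_prod.mpr
    ⟨(MvPolynomial.mem_homogeneousSubmodule _ _).mpr (hG.C_mul _),
      (MvPolynomial.mem_homogeneousSubmodule _ _).mpr (hG.C_mul _)⟩

variable (K) in
/-- For `n = 2i` this is the `i`-th reduced Kodaira–Spencer–Mather map of the multicusp
`c_θ`, written in the coordinates `normalJet` of its target. -/
noncomputable def cuspNormalJets {ι : Type*} (n : ℕ) (θ : ι → ℝ) :
    MvPolynomial (Fin 2) K × MvPolynomial (Fin 2) K →ₗ[K] ι → K × K :=
  LinearMap.pi fun k => normalJet K n (θ k) ∘ₗ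
    (MvPolynomial.aeval ![cusp1 K (θ k), cusp2 K (θ k)]).toLinearMap.prodMap
      (MvPolynomial.aeval ![cusp1 K (θ k), cusp2 K (θ k)]).toLinearMap

theorem cuspNormalJets_apply {ι : Type*} (n : ℕ) (θ : ι → ℝ)
    (ξ : MvPolynomial (Fin 2) K × MvPolynomial (Fin 2) K) (k : ι) :
    cuspNormalJets K n θ ξ k =
      normalJet K n (θ k) (cuspEval K (θ k) ξ.1, cuspEval K (θ k) ξ.2) :=
  rfl

theorem cuspNormalJets_directionField {ι : Type*} (n : ℕ) (θ : ι → ℝ) (a : ℝ)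
    (G : MvPolynomial (Fin 2) K) (k : ι) :
    cuspNormalJets K n θ (directionField K a G) k =
      ((Real.sin (a - θ k) : K) * (cuspEval K (θ k) G).coeff n,
        2 * (Real.sin (a - θ k) : K) * (cuspEval K (θ k) G).coeff (n + 1)
          - 3 * (Real.cos (a - θ k) : K) * (cuspEval K (θ k) G).coeff n) := by
  simp only [cuspNormalJets_apply, directionField, cuspEval_C_mul, normalJet, LinearMap.coe_mk,
    AddHom.coe_mk, coeff_C_mul, Real.sin_sub, Real.cos_sub, map_sub, map_mul, map_add]
  congr 1 <;> ring

end Cusp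

section Multicusp

open Finset

variable {K : Type*} [RCLike K] {i : ℕ} (θ : Fin (i + 1) → ℝ)

variable (K) in
noncomputable def lineFormsExcept (k : Fin (i + 1)) : MvPolynomial (Fin 2) K :=
  ∏ j ∈ univ.erase k, lineForm K (θ j)

variable (K) in
noncomputable def sinDiffProd (k : Fin (i + 1)) : K :=
  ∏ j ∈ univ.erase k, (Real.sin (θ j - θ k) : K)

theorem lineFormsExcept_isHomogeneous (k : Fin (i + 1)) :
    (lineFormsExcept K θ k).IsHomogeneous i := by
  simpa [lineFormsExcept] using MvPolynomial.IsHomogeneous.prod (univ.erase k)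
    (fun j => lineForm K (θ j)) (fun _ => 1) (fun j _ => lineForm_isHomogeneous (θ j))

theorem sinDiffProd_ne_zero {θ : Fin (i + 1) → ℝ} (hθ : Admissible θ) (k : Fin (i + 1)) :
    sinDiffProd K θ k ≠ 0 := by
  refine prod_ne_zero_iff.mpr fun j hj => ?_
  rw [ne_eq, RCLike.ofReal_eq_zero, Real.sin_eq_zero_iff]
  rintro ⟨m, hm⟩
  exact hθ j k (ne_of_mem_erase hj) m hm.symm

theorem cuspEval_lineFormsExcept (k b : Fin (i + 1)) :
    cuspEval K (θ b) (lineFormsExcept K θ k) =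
      X ^ (2 * i) * ∏ j ∈ univ.erase k,
        (C (Real.sin (θ j - θ b) : K) - C (Real.cos (θ j - θ b) : K) * X) := by
  rw [lineFormsExcept, cuspEval_prod_lineForm, card_erase_of_mem (mem_univ k), card_univ,
    Fintype.card_fin, Nat.add_sub_cancel]

theorem coeff_cuspEval_lineFormsExcept (k b : Fin (i + 1)) :
    (cuspEval K (θ b) (lineFormsExcept K θ k)).coeff (2 * i) =
      if b = k then sinDiffProd K θ k else 0 := by
  rw [cuspEval_lineFormsExcept, coeff_X_pow_mul', if_pos le_rfl, Nat.sub_self, coeff_zero_prod]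
  simp only [coeff_sub, coeff_C_zero, mul_coeff_zero, coeff_X_zero, mul_zero, sub_zero]
  split_ifs with hb
  · rw [hb, sinDiffProd]
  · exact prod_eq_zero (mem_erase.mpr ⟨hb, mem_univ b⟩) (by simp)

theorem coeff_succ_cuspEval_lineFormsExcept {k b : Fin (i + 1)} (hb : b ≠ k) :
    (cuspEval K (θ b) (lineFormsExcept K θ k)).coeff (2 * i + 1) =
      -∏ j ∈ (univ.erase k).erase b, (Real.sin (θ j - θ b) : K) := by
  rw [cuspEval_lineFormsExcept, ← mul_prod_erase _ _ (mem_erase.mpr ⟨hb, mem_univ b⟩)]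
  simp [coeff_X_pow_mul', coeff_zero_prod, mul_coeff_zero]

theorem cuspNormalJets_radial (k : Fin (i + 1)) :
    cuspNormalJets K (2 * i) θ (directionField K (θ k) (lineFormsExcept K θ k)) =
      -(2 : K) • (fun b => ((0 : K), sinDiffProd K θ b))
        - sinDiffProd K θ k • (Pi.single k (0, 1) : Fin (i + 1) → K × K) := by
  funext b
  rw [cuspNormalJets_directionField, coeff_cuspEval_lineFormsExcept]
  rcases eq_or_ne b k with rfl | hb
  · simp only [sub_self, Real.sin_zero, Real.cos_zero, map_zero, map_one, if_true, zero_mul,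
      mul_zero, mul_one, zero_sub, neg_smul, Pi.sub_apply, Pi.neg_apply, Pi.smul_apply,
      Prod.smul_mk, smul_eq_mul, Prod.neg_mk, neg_zero, Pi.single_eq_same, Prod.mk_sub_mk]
    congr 1; ring
  · rw [if_neg hb, coeff_succ_cuspEval_lineFormsExcept θ hb]
    have hk : k ∈ univ.erase b := mem_erase.mpr ⟨hb.symm, mem_univ k⟩
    have hπ : sinDiffProd K θ b = (Real.sin (θ k - θ b) : K) *
        ∏ j ∈ (univ.erase k).erase b, (Real.sin (θ j - θ b) : K) := by
      rw [sinDiffProd, ← mul_prod_erase _ _ hk, erase_right_comm]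
    simp only [mul_zero, mul_neg, sub_zero, neg_smul, Pi.sub_apply, Pi.neg_apply, Pi.smul_apply,
      hπ, Prod.smul_mk, smul_eq_mul, Prod.neg_mk, neg_zero, Pi.single_eq_of_ne hb, smul_zero]
    congr 1; ring

theorem cuspNormalJets_normal_fst (k b : Fin (i + 1)) :
    (cuspNormalJets K (2 * i) θ
      (directionField K (θ k + Real.pi / 2) (lineFormsExcept K θ k)) b).1 =
      if b = k then sinDiffProd K θ k else 0 := by
  rw [cuspNormalJets_directionField, coeff_cuspEval_lineFormsExcept]
  split_ifs with hb
  · simp [hb]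
  · simp

theorem sinDiffProd_mem_map_cuspNormalJets :
    (fun b => ((0 : K), sinDiffProd K θ b)) ∈ (Vsp K i).map (cuspNormalJets K (2 * i) θ) := by
  have hsum := Submodule.sum_mem _ fun k (_ : k ∈ univ) => Submodule.mem_map_of_mem
    (f := cuspNormalJets K (2 * i) θ)
    (directionField_mem_Vsp (lineFormsExcept_isHomogeneous (K := K) θ k) (θ k))
  simp_rw [cuspNormalJets_radial] at hsum
  have hne : (-(2 * i + 3) : K) ≠ 0 := by
    rw [neg_ne_zero]; exact_mod_cast (by omega : 2 * i + 3 ≠ 0)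
  refine (Submodule.smul_mem_iff _ hne).mp ?_
  convert hsum using 1
  funext b
  ext <;> simp only [Pi.smul_apply, Prod.smul_mk, smul_eq_mul, mul_zero, neg_smul,
    Finset.sum_apply, Pi.sub_apply, Pi.neg_apply, Prod.neg_mk, neg_zero, Pi.single_apply,
    smul_ite, mul_one, smul_zero, sum_sub_distrib, sum_const, card_univ, Fintype.card_fin,
    smul_neg, nsmul_eq_mul, Nat.cast_add, Nat.cast_one, sum_ite_eq, mem_univ,
    if_true, Prod.mk_sub_mk, sub_self]
  ring

variable {θ}

theorem single_snd_mem_map_cuspNormalJets (hθ : Admissible θ) (k : Fin (i + 1)) :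
    (Pi.single k (0, 1) : Fin (i + 1) → K × K) ∈
      (Vsp K i).map (cuspNormalJets K (2 * i) θ) := by
  have hradial := Submodule.mem_map_of_mem (f := cuspNormalJets K (2 * i) θ)
    (directionField_mem_Vsp (lineFormsExcept_isHomogeneous (K := K) θ k) (θ k))
  rw [cuspNormalJets_radial] at hradial
  refine (Submodule.smul_mem_iff _ (sinDiffProd_ne_zero (K := K) hθ k)).mp ?_
  convert Submodule.sub_mem _
    (Submodule.smul_mem _ (-2 : K) (sinDiffProd_mem_map_cuspNormalJets θ)) hradial using 1
  abel

theorem single_fst_mem_map_cuspNormalJets (hθ : Admissible θ) (k : Fin (i + 1)) :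
    (Pi.single k (1, 0) : Fin (i + 1) → K × K) ∈
      (Vsp K i).map (cuspNormalJets K (2 * i) θ) := by
  set τ := cuspNormalJets K (2 * i) θ
    (directionField K (θ k + Real.pi / 2) (lineFormsExcept K θ k))
  have hτ : τ ∈ (Vsp K i).map (cuspNormalJets K (2 * i) θ) := Submodule.mem_map_of_mem
    (directionField_mem_Vsp (lineFormsExcept_isHomogeneous (K := K) θ k) _)
  have hfst : ∑ b, (τ b).1 • (Pi.single b (1, 0) : Fin (i + 1) → K × K) =
      sinDiffProd K θ k • Pi.single k (1, 0) := by
    simp only [τ, cuspNormalJets_normal_fst, ite_smul, zero_smul, sum_ite_eq', mem_univ, if_true]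
  refine (Submodule.smul_mem_iff _ (sinDiffProd_ne_zero (K := K) hθ k)).mp ?_
  rw [← hfst, eq_sub_of_add_eq (Pi.eq_sum_smul_single_fst_add_sum_smul_single_snd τ).symm]
  exact Submodule.sub_mem _ hτ (Submodule.sum_mem _ fun b _ =>
    Submodule.smul_mem _ _ (single_snd_mem_map_cuspNormalJets hθ b))

theorem map_cuspNormalJets_Vsp_eq_top (hθ : Admissible θ) :
    (Vsp K i).map (cuspNormalJets K (2 * i) θ) = ⊤ := by
  refine Submodule.eq_top_iff'.mpr fun τ => ?_
  rw [Pi.eq_sum_smul_single_fst_add_sum_smul_single_snd τ]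
  exact Submodule.add_mem _
    (Submodule.sum_mem _ fun b _ =>
      Submodule.smul_mem _ _ (single_fst_mem_map_cuspNormalJets hθ b))
    (Submodule.sum_mem _ fun b _ =>
      Submodule.smul_mem _ _ (single_snd_mem_map_cuspNormalJets hθ b))

end Multicusp

/-- Surjectivity of the `i`-th reduced Kodaira–Spencer–Mather map of the multicusp
`c_(θ₀,…,θ_i)` for `i ≥ 1`: every branchwise family of pairs of polynomials divisible by
`x^(2i)` is, modulo `x^(2i+2)` and modulo multiples of the branch derivatives, realized by
a single pair of homogeneous degree-`i` vector-field components `(P, Q)`. -/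
theorem multicusp_KSM_surjective (K : Type*) [RCLike K] (i : ℕ) (hi : 1 ≤ i)
    (θ : Fin (i + 1) → ℝ) (hθ : Admissible θ)
    (A B : Fin (i + 1) → Polynomial K)
    (hA : ∀ k, (X : Polynomial K) ^ (2 * i) ∣ A k)
    (hB : ∀ k, (X : Polynomial K) ^ (2 * i) ∣ B k) :
    ∃ (P Q : MvPolynomial (Fin 2) K) (η : Fin (i + 1) → Polynomial K),
      P.IsHomogeneous i ∧ Q.IsHomogeneous i ∧
      ∀ k, (X : Polynomial K) ^ (2 * i + 2) ∣ A k - cuspEval K (θ k) P - η k * dcusp1 K (θ k) ∧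
        (X : Polynomial K) ^ (2 * i + 2) ∣ B k - cuspEval K (θ k) Q - η k * dcusp2 K (θ k) := by
  obtain ⟨⟨P, Q⟩, hPQ, hjets⟩ : (fun k => normalJet K (2 * i) (θ k) (A k, B k)) ∈
      (Vsp K i).map (cuspNormalJets K (2 * i) θ) :=
    map_cuspNormalJets_Vsp_eq_top (K := K) hθ ▸ Submodule.mem_top
  obtain ⟨hP, hQ⟩ : P.IsHomogeneous i ∧ Q.IsHomogeneous i := Submodule.mem_prod.mp hPQ
  have hη : ∀ k, ∃ η : K[X],
      X ^ (2 * i + 2) ∣ A k - cuspEval K (θ k) P - η * dcusp1 K (θ k) ∧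
      X ^ (2 * i + 2) ∣ B k - cuspEval K (θ k) Q - η * dcusp2 K (θ k) := by
    intro k
    refine exists_tangent_of_normalJet_eq_zero (by omega) (θ k)
      (dvd_sub (hA k) (X_pow_dvd_cuspEval hP _)) (dvd_sub (hB k) (X_pow_dvd_cuspEval hQ _)) ?_
    rw [← Prod.mk_sub_mk, map_sub, ← congr_fun hjets k, cuspNormalJets_apply, sub_self]
  choose η hη using hη
  exact ⟨P, Q, η, hP, hQ, hη⟩
end

section
/- The pair of linear vector fields (2X, 3Y) and (2Y, 0) is a basis of the subspace {ξ ∈ V₁ : ξ is 1-liftably tangent to c₀}, where c₀(x) = (x², x³) is the standard cusp. Equivalently, a linear vector field ξ = (aX + bY, cX + dY) on K² admits a polynomial η ∈ K[x] with x⁴ dividing both a x² + b x³ − 2x·η(x) and c x² + d x³ − 3x²·η(x) if and only if c = 0 and 2d = 3a. -/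
open Polynomial

/-! On the standard cusp a linear vector field `ξ = (aX + bY, cX + dY)` becomes
`(a x² + b x³, c x² + d x³)` and `c₀' = (2x, 3x²)`, so liftability modulo `x⁴` only involves
the coefficients `η₀, η₁` of `η`: the `x`-coefficient of the first component forces `η₀ = 0`,
the `x²`-coefficients give `a = 2η₁` and `c = 3η₀ = 0`, and the `x³`-coefficient of the second
component gives `d = 3η₁`. Conversely `η = (a/2) x + (b/2) x²` works whenever `c = 0` and
`2d = 3a`. The kernel is therefore `{c = 0, 2d = 3a}`, spanned by `(2X, 3Y)` and `(2Y, 0)`. -/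

theorem exists_X_pow_four_dvd_iff {K : Type*} [Field K] [NeZero (2 : K)] (a b c d : K) :
    (∃ η : K[X], X ^ 4 ∣ C a * X ^ 2 + C b * X ^ 3 - 2 * X * η ∧
        X ^ 4 ∣ C c * X ^ 2 + C d * X ^ 3 - 3 * X ^ 2 * η) ↔
      c = 0 ∧ 2 * d = 3 * a := by
  constructor
  · rintro ⟨η, h₁, h₂⟩
    rw [X_pow_dvd_iff] at h₁ h₂
    have e₁ : η.coeff 0 = 0 := by
      simpa [coeff_X_pow, pow_two, mul_assoc, coeff_X_mul, coeff_X, sub_eq_zero, two_ne_zero] using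
        h₁ 1 (by norm_num)
    have e₂ : a = 2 * η.coeff 1 := by
      simpa [coeff_X_pow, pow_two, mul_assoc, coeff_X_mul, coeff_X, sub_eq_zero, two_ne_zero] using
        h₁ 2 (by norm_num)
    have f₂ : c = 3 * η.coeff 0 := by
      simpa [coeff_X_pow, pow_two, mul_assoc, coeff_X_mul, coeff_X, sub_eq_zero, two_ne_zero] using
        h₂ 2 (by norm_num)
    have f₃ : d = 3 * η.coeff 1 := by
      simpa [coeff_X_pow, pow_two, mul_assoc, coeff_X_mul, coeff_X, sub_eq_zero, two_ne_zero] using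
        h₂ 3 (by norm_num)
    exact ⟨by rw [f₂, e₁, mul_zero], by rw [e₂, f₃]; ring⟩
  · rintro ⟨hc, hda⟩
    have ha : C a = 2 * C (a / 2) := by
      rw [← map_ofNat C 2, ← C_mul, mul_div_cancel₀ a two_ne_zero]
    have hb : C b = 2 * C (b / 2) := by
      rw [← map_ofNat C 2, ← C_mul, mul_div_cancel₀ b two_ne_zero]
    have hd : C d = 3 * C (a / 2) := by
      rw [← map_ofNat C 3, ← C_mul, ← mul_div_assoc, ← hda,
        mul_div_cancel_left₀ d two_ne_zero]
    refine ⟨C (a / 2) * X + C (b / 2) * X ^ 2, ⟨0, ?_⟩, ⟨-(3 * C (b / 2)), ?_⟩⟩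
    · linear_combination X ^ 2 * ha + X ^ 3 * hb
    · rw [hc, C_0]
      linear_combination X ^ 3 * hd

section LinearVectorFields

variable {R : Type*} [CommSemiring R]

open MvPolynomial

noncomputable def linearVectorField (a b c d : R) :
    MvPolynomial (Fin 2) R × MvPolynomial (Fin 2) R :=
  (a • X 0 + b • X 1, c • X 0 + d • X 1)

theorem mem_homogeneousSubmodule_one_iff_fin_two {p : MvPolynomial (Fin 2) R} :
    p ∈ homogeneousSubmodule (Fin 2) R 1 ↔ ∃ a b : R, a • X 0 + b • X 1 = p := by
  simp [homogeneousSubmodule_one_eq_span_X, Submodule.mem_span_range_iff_exists_fun,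
    Fin.sum_univ_two, Fin.exists_fin_succ_pi]

theorem linearVectorField_smul_add_smul (s t a b c d a' b' c' d' : R) :
    s • linearVectorField a b c d + t • linearVectorField a' b' c' d' =
      linearVectorField (s * a + t * a') (s * b + t * b') (s * c + t * c') (s * d + t * d') := by
  simp only [linearVectorField, Prod.smul_mk, Prod.mk_add_mk, smul_add, smul_smul, add_smul]
  congr 1 <;> abel

@[simp]
theorem linearVectorField_zero : linearVectorField (0 : R) 0 0 0 = 0 := by
  simp [linearVectorField, Prod.zero_eq_mk]

theorem linearVectorField_inj {a b c d a' b' c' d' : R} :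
    linearVectorField a b c d = linearVectorField a' b' c' d' ↔
      a = a' ∧ b = b' ∧ c = c' ∧ d = d' := by
  refine ⟨fun h => ?_, by rintro ⟨rfl, rfl, rfl, rfl⟩; rfl⟩
  obtain ⟨h₁, h₂⟩ := Prod.ext_iff.mp h
  refine ⟨?_, ?_, ?_, ?_⟩
  · simpa [linearVectorField] using congrArg (MvPolynomial.eval ![1, 0]) h₁
  · simpa [linearVectorField] using congrArg (MvPolynomial.eval ![0, 1]) h₁
  · simpa [linearVectorField] using congrArg (MvPolynomial.eval ![1, 0]) h₂
  · simpa [linearVectorField] using congrArg (MvPolynomial.eval ![0, 1]) h₂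

end LinearVectorFields

section StandardCusp

variable {K : Type*} [RCLike K]

theorem mem_Vsp_one_iff {ξ : MvPolynomial (Fin 2) K × MvPolynomial (Fin 2) K} :
    ξ ∈ Vsp K 1 ↔ ∃ a b c d : K, linearVectorField a b c d = ξ := by
  simp only [Vsp, Submodule.mem_prod, mem_homogeneousSubmodule_one_iff_fin_two, linearVectorField,
    Prod.ext_iff]
  simp

theorem cuspEval_zero_smul_X_add_smul_X (a b : K) :
    cuspEval K 0 (a • MvPolynomial.X 0 + b • MvPolynomial.X 1) = C a * X ^ 2 + C b * X ^ 3 := by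
  simp [cuspEval, cusp1, cusp2, smul_eq_C_mul]

theorem liftTang_one_zero_linearVectorField_iff (a b c d : K) :
    LiftTang K 1 0 (linearVectorField a b c d) ↔ c = 0 ∧ 2 * d = 3 * a := by
  rw [← exists_X_pow_four_dvd_iff a b c d]
  refine exists_congr fun η => ?_
  simp [linearVectorField, cuspEval_zero_smul_X_add_smul_X, dcusp1, dcusp2, mul_comm η]

end StandardCusp

open MvPolynomial in
/-- The linear vector fields `(2X, 3Y)` and `(2Y, 0)` form a basis of
`{ξ ∈ V₁ : ξ is 1-liftably tangent to the standard cusp c₀}`; equivalently, a linear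
vector field `(aX + bY, cX + dY)` lies in this kernel iff `c = 0` and `2d = 3a`. -/
theorem basis_of_kernel_for_standard_cusp (K : Type*) [RCLike K] :
    ((((2 : MvPolynomial (Fin 2) K) * X 0, (3 : MvPolynomial (Fin 2) K) * X 1) ∈ Vsp K 1 ∧
        LiftTang K 1 0 ((2 : MvPolynomial (Fin 2) K) * X 0, 3 * X 1)) ∧
      (((2 : MvPolynomial (Fin 2) K) * X 1, (0 : MvPolynomial (Fin 2) K)) ∈ Vsp K 1 ∧
        LiftTang K 1 0 ((2 : MvPolynomial (Fin 2) K) * X 1, 0)) ∧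
      LinearIndependent K
        ![(((2 : MvPolynomial (Fin 2) K) * X 0, (3 : MvPolynomial (Fin 2) K) * X 1)),
          (((2 : MvPolynomial (Fin 2) K) * X 1, (0 : MvPolynomial (Fin 2) K)))] ∧
      ∀ ξ : MvPolynomial (Fin 2) K × MvPolynomial (Fin 2) K,
        ξ ∈ Vsp K 1 → LiftTang K 1 0 ξ →
        ∃ s t : K, ξ = s • ((2 : MvPolynomial (Fin 2) K) * X 0, (3 : MvPolynomial (Fin 2) K) * X 1)
          + t • ((2 : MvPolynomial (Fin 2) K) * X 1, (0 : MvPolynomial (Fin 2) K))) ∧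
    ∀ a b c d : K,
      (∃ η : Polynomial K,
        (Polynomial.X : Polynomial K) ^ 4 ∣
          Polynomial.C a * Polynomial.X ^ 2 + Polynomial.C b * Polynomial.X ^ 3
            - 2 * Polynomial.X * η ∧
        (Polynomial.X : Polynomial K) ^ 4 ∣
          Polynomial.C c * Polynomial.X ^ 2 + Polynomial.C d * Polynomial.X ^ 3
            - 3 * Polynomial.X ^ 2 * η) ↔
      c = 0 ∧ 2 * d = 3 * a := by
  have hv₁ : ((2 : MvPolynomial (Fin 2) K) * X 0, (3 : MvPolynomial (Fin 2) K) * X 1) =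
      linearVectorField 2 0 0 3 := by
    simp [linearVectorField, MvPolynomial.smul_eq_C_mul, map_ofNat]
  have hv₂ : ((2 : MvPolynomial (Fin 2) K) * X 1, (0 : MvPolynomial (Fin 2) K)) =
      linearVectorField 0 2 0 0 := by
    simp [linearVectorField, MvPolynomial.smul_eq_C_mul, map_ofNat]
  rw [hv₁, hv₂]
  refine ⟨⟨⟨mem_Vsp_one_iff.mpr ⟨2, 0, 0, 3, rfl⟩, ?_⟩,
    ⟨mem_Vsp_one_iff.mpr ⟨0, 2, 0, 0, rfl⟩, ?_⟩, ?_, ?_⟩, exists_X_pow_four_dvd_iff⟩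
  · norm_num [liftTang_one_zero_linearVectorField_iff]
  · simp [liftTang_one_zero_linearVectorField_iff]
  · refine LinearIndependent.pair_iff.mpr fun s t hst => ?_
    rw [linearVectorField_smul_add_smul, ← linearVectorField_zero, linearVectorField_inj] at hst
    simp only [mul_zero, add_zero, zero_add, mul_eq_zero, two_ne_zero, or_false] at hst
    exact ⟨hst.1, hst.2.1⟩
  · rintro ξ hξ hlift
    obtain ⟨a, b, c, d, rfl⟩ := mem_Vsp_one_iff.mp hξ
    obtain ⟨rfl, hda⟩ := (liftTang_one_zero_linearVectorField_iff a b c d).mp hlift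
    obtain rfl : d = 3 * (a / 2) := by linear_combination hda / 2
    refine ⟨a / 2, b / 2, ?_⟩
    rw [linearVectorField_smul_add_smul]
    congr 1 <;> ring
end

section
/- Let θ₁ be a real number with sin θ₁ ≠ 0. If a linear vector field ξ ∈ V₁ is 1-liftably tangent to both the standard cusp c₀ and the rotated cusp c_{θ₁}, then ξ = 0. (Equivalently, ker(₁ω̄c₀) ∩ ker(₁ω̄c_{θ₁}) = {0}, which together with the dimension count dim V₁ = 4 gives the base case V₁ = ker(₁ω̄c₀) ⊕ ker(₁ω̄c_{θ₁}) of the direct sum decomposition theorem for the double cusp.) -/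
open Polynomial

/-- Auxiliary: a homogeneous polynomial of degree 1 in two variables is linear. -/
lemma homog_one_decomp {K : Type*} [CommRing K] (P : MvPolynomial (Fin 2) K)
    (h : P.IsHomogeneous 1) :
    P = MvPolynomial.C (MvPolynomial.coeff (Finsupp.single 0 1) P) * MvPolynomial.X 0
      + MvPolynomial.C (MvPolynomial.coeff (Finsupp.single 1 1) P) * MvPolynomial.X 1 := by
  apply MvPolynomial.ext
  intro d
  by_cases h0 : d = Finsupp.single 0 1
  · subst h0
    simp [MvPolynomial.coeff_X', Finsupp.single_eq_single_iff]
  by_cases h1 : d = Finsupp.single 1 1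
  · subst h1
    simp [MvPolynomial.coeff_X', Finsupp.single_eq_single_iff]
  · have hd : d.degree ≠ 1 := by
      intro hdeg
      have hdsum : ∑ i : Fin 2, d i = 1 := by
        rw [← Finset.sum_subset (Finset.subset_univ d.support)
          (fun x _ hx => Finsupp.notMem_support_iff.mp hx)]
        exact hdeg
      have hsum : d 0 + d 1 = 1 := by simpa [Fin.sum_univ_two] using hdsum
      rcases Nat.eq_zero_or_pos (d 0) with hz | hp
      · apply h1; ext i; fin_cases i <;> simp_all <;> omega
      · apply h0; ext i; fin_cases i <;> simp_all <;> omega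
    rw [h.coeff_eq_zero hd]
    have e0 : ¬ (Finsupp.single (0 : Fin 2) 1 = d) := fun e => h0 e.symm
    have e1 : ¬ (Finsupp.single (1 : Fin 2) 1 = d) := fun e => h1 e.symm
    simp [MvPolynomial.coeff_X', e0, e1]

/-- Auxiliary: coefficient equations from tangency of the first component. -/
lemma lift_eqs1 {K : Type*} [RCLike K] (θ : ℝ) (a b : K) (η : Polynomial K)
    (h : (X : Polynomial K) ^ 4 ∣ (C a * cusp1 K θ + C b * cusp2 K θ) - η * dcusp1 K θ) :
    2 * (Real.cos θ : K) * η.coeff 0 = 0 ∧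
    a * (Real.cos θ : K) + b * (Real.sin θ : K)
      = 2 * (Real.cos θ : K) * η.coeff 1 - 3 * (Real.sin θ : K) * η.coeff 0 ∧
    -(a * (Real.sin θ : K)) + b * (Real.cos θ : K)
      = 2 * (Real.cos θ : K) * η.coeff 2 - 3 * (Real.sin θ : K) * η.coeff 1 := by
  set s : K := (Real.sin θ : K)
  set t : K := (Real.cos θ : K)
  have hre : η * dcusp1 K θ = C (2*t) * (η * X ^ 1) - C (3*s) * (η * X ^ 2) := by
    simp only [dcusp1, Polynomial.C_mul, map_ofNat]
    ring
  have h1 := Polynomial.X_pow_dvd_iff.mp h 1 (by norm_num)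
  have h2 := Polynomial.X_pow_dvd_iff.mp h 2 (by norm_num)
  have h3 := Polynomial.X_pow_dvd_iff.mp h 3 (by norm_num)
  rw [hre] at h1 h2 h3
  simp only [Polynomial.coeff_sub, Polynomial.coeff_add, Polynomial.coeff_C_mul,
    Polynomial.coeff_mul_X_pow', cusp1, cusp2, Polynomial.coeff_X_pow] at h1 h2 h3
  norm_num at h1 h2 h3
  refine ⟨by rcases h1 with h | h <;> simp [h], by linear_combination h2, by linear_combination h3⟩

/-- Auxiliary: coefficient equations from tangency of the second component. -/
lemma lift_eqs2 {K : Type*} [RCLike K] (θ : ℝ) (c d : K) (η : Polynomial K)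
    (h : (X : Polynomial K) ^ 4 ∣ (C c * cusp1 K θ + C d * cusp2 K θ) - η * dcusp2 K θ) :
    2 * (Real.sin θ : K) * η.coeff 0 = 0 ∧
    c * (Real.cos θ : K) + d * (Real.sin θ : K)
      = 2 * (Real.sin θ : K) * η.coeff 1 + 3 * (Real.cos θ : K) * η.coeff 0 ∧
    -(c * (Real.sin θ : K)) + d * (Real.cos θ : K)
      = 2 * (Real.sin θ : K) * η.coeff 2 + 3 * (Real.cos θ : K) * η.coeff 1 := by
  set s : K := (Real.sin θ : K)
  set t : K := (Real.cos θ : K)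
  have hre : η * dcusp2 K θ = C (2*s) * (η * X ^ 1) + C (3*t) * (η * X ^ 2) := by
    simp only [dcusp2, Polynomial.C_mul, map_ofNat]
    ring
  have h1 := Polynomial.X_pow_dvd_iff.mp h 1 (by norm_num)
  have h2 := Polynomial.X_pow_dvd_iff.mp h 2 (by norm_num)
  have h3 := Polynomial.X_pow_dvd_iff.mp h 3 (by norm_num)
  rw [hre] at h1 h2 h3
  simp only [Polynomial.coeff_sub, Polynomial.coeff_add, Polynomial.coeff_C_mul,
    Polynomial.coeff_mul_X_pow', cusp1, cusp2, Polynomial.coeff_X_pow] at h1 h2 h3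
  norm_num at h1 h2 h3
  refine ⟨by rcases h1 with h | h <;> simp [h], by linear_combination h2, by linear_combination h3⟩

lemma cuspEval_linear {K : Type*} [RCLike K] (θ : ℝ) (a b : K) :
    cuspEval K θ (MvPolynomial.C a * MvPolynomial.X 0 + MvPolynomial.C b * MvPolynomial.X 1)
      = C a * cusp1 K θ + C b * cusp2 K θ := by
  simp [cuspEval, MvPolynomial.aeval_X, Polynomial.algebraMap_eq]

/-- Base case of the direct sum decomposition for the double cusp: if `sin θ₁ ≠ 0` and the
linear vector field `ξ ∈ V₁` is `1`-liftably tangent to both the standard cusp `c₀` and the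
rotated cusp `c_{θ₁}`, then `ξ = 0`, i.e. `ker(₁ω̄c₀) ∩ ker(₁ω̄c_{θ₁}) = {0}`. -/
theorem kernel_intersection_trivial (K : Type*) [RCLike K] (θ₁ : ℝ) (hθ₁ : Real.sin θ₁ ≠ 0)
    (ξ : MvPolynomial (Fin 2) K × MvPolynomial (Fin 2) K) (hξ : ξ ∈ Vsp K 1)
    (h0 : LiftTang K 1 0 ξ) (h1 : LiftTang K 1 θ₁ ξ) : ξ = 0 := by
  obtain ⟨hP, hQ⟩ := Submodule.mem_prod.mp hξ
  rw [MvPolynomial.mem_homogeneousSubmodule] at hP hQ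
  set a := MvPolynomial.coeff (Finsupp.single 0 1) ξ.1 with ha_def
  set b := MvPolynomial.coeff (Finsupp.single 1 1) ξ.1 with hb_def
  set c := MvPolynomial.coeff (Finsupp.single 0 1) ξ.2 with hc_def
  set d := MvPolynomial.coeff (Finsupp.single 1 1) ξ.2 with hd_def
  have hPd : ξ.1 = MvPolynomial.C a * MvPolynomial.X 0 + MvPolynomial.C b * MvPolynomial.X 1 :=
    homog_one_decomp _ hP
  have hQd : ξ.2 = MvPolynomial.C c * MvPolynomial.X 0 + MvPolynomial.C d * MvPolynomial.X 1 :=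
    homog_one_decomp _ hQ
  obtain ⟨η, hη1, hη2⟩ := h0
  obtain ⟨ζ, hζ1, hζ2⟩ := h1
  rw [hPd] at hη1 hζ1
  rw [hQd] at hη2 hζ2
  rw [cuspEval_linear] at hη1 hζ1 hη2 hζ2
  norm_num at hη1 hζ1 hη2 hζ2
  obtain ⟨e01, e02, e03⟩ := lift_eqs1 0 a b η hη1
  obtain ⟨f01, f02, f03⟩ := lift_eqs2 0 c d η hη2
  obtain ⟨A1', A2, A3'⟩ := lift_eqs1 θ₁ a b ζ hζ1
  obtain ⟨B1, B2, B3⟩ := lift_eqs2 θ₁ c d ζ hζ2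
  set s : K := (Real.sin θ₁ : K) with hs_def
  set t : K := (Real.cos θ₁ : K) with ht_def
  have hs : s ≠ 0 := by
    simp [hs_def, RCLike.ofReal_eq_zero, hθ₁]
  simp [Real.sin_zero, Real.cos_zero] at e01 e02 e03 f01 f02 f03
  -- from θ = 0 data
  have he0 : η.coeff 0 = 0 := e01
  have hc0 : c = 0 := by linear_combination f02 + 3 * he0
  have hd0 : 2 * d = 3 * a := by linear_combination 2 * f03 - 3 * e02
  -- from θ = θ₁ data
  have hz0 : ζ.coeff 0 = 0 := by
    rcases mul_eq_zero.mp B1 with h | h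
    · rcases mul_eq_zero.mp h with h' | h'
      · exact absurd h' two_ne_zero
      · exact absurd h' hs
    · exact h
  have pyth : s ^ 2 + t ^ 2 = 1 := by
    have := Real.sin_sq_add_cos_sq θ₁
    rw [hs_def, ht_def]
    push_cast
    exact_mod_cast congrArg (fun x : ℝ => (x : K)) this
  have h34s : s * (3 * a - 4 * ζ.coeff 1) = 0 := by
    linear_combination 2 * B2 - 2 * t * hc0 - s * hd0 + 6 * t * hz0
  have h34 : 3 * a = 4 * ζ.coeff 1 := by
    rcases mul_eq_zero.mp h34s with h | h
    · exact absurd h hs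
    · linear_combination h
  have hb : 2 * b * s = a * t := by
    linear_combination 2 * A2 - t * h34 - 6 * s * hz0
  have hq : 8 * s * ζ.coeff 2 = -(3 * a * t) := by
    linear_combination -4 * B3 - 4 * s * hc0 + 2 * t * hd0 + 3 * t * h34
  have ha : a = 0 := by
    linear_combination (4 * s / 5) * A3' - (2 * t / 5) * hb + (t / 5) * hq
      + (3 * s ^ 2 / 5) * h34 - a * pyth
  have hb2 : b * (2 * s) = 0 := by linear_combination hb + t * ha
  have hb0 : b = 0 := by
    rcases mul_eq_zero.mp hb2 with h | h
    · exact h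
    · exact absurd h (mul_ne_zero two_ne_zero hs)
  have hd0' : d = 0 := by linear_combination hd0 / 2 + (3 / 2) * ha
  have h1z : ξ.1 = 0 := by rw [hPd, ha, hb0]; simp
  have h2z : ξ.2 = 0 := by rw [hQd, hc0, hd0']; simp
  exact Prod.ext h1z h2z
end

section
/- Let i ≥ 0 be an integer and θ a real number. If ξ = (P, Q) ∈ V_i is i-liftably tangent to c_θ, then both X·ξ = (X·P, X·Q) and Y·ξ = (Y·P, Y·Q), which belong to V_{i+1}, are (i+1)-liftably tangent to c_θ. (Explicitly: if η ∈ K[x] witnesses the tangency of ξ, then η̃(x) = (x²cos θ − x³sin θ)·η(x) witnesses it for X·ξ, and η̃(x) = (x²sin θ + x³cos θ)·η(x) witnesses it for Y·ξ.) -/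
open Polynomial

/-!
If `η` lifts `ξ` to order `2i + 2`, then `c_θ,j · η` lifts `X_j · ξ` to order `2i + 4`:
substituting `c_θ` turns `X_j` into the component `c_θ,j`, which vanishes to order two at `0`,
so it multiplies both the lifting error and the divisor by `x²`.
-/

theorem X_sq_dvd_cusp1 (K : Type*) [RCLike K] (θ : ℝ) : (X : K[X]) ^ 2 ∣ cusp1 K θ :=
  ⟨C (Real.cos θ : K) - C (Real.sin θ : K) * X, by rw [cusp1]; ring⟩

theorem X_sq_dvd_cusp2 (K : Type*) [RCLike K] (θ : ℝ) : (X : K[X]) ^ 2 ∣ cusp2 K θ :=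
  ⟨C (Real.sin θ : K) + C (Real.cos θ : K) * X, by rw [cusp2]; ring⟩

theorem X_sq_dvd_cusp (K : Type*) [RCLike K] (θ : ℝ) (j : Fin 2) :
    (X : K[X]) ^ 2 ∣ ![cusp1 K θ, cusp2 K θ] j := by
  fin_cases j
  exacts [X_sq_dvd_cusp1 K θ, X_sq_dvd_cusp2 K θ]

theorem cuspEval_X_mul (K : Type*) [RCLike K] (θ : ℝ) (j : Fin 2)
    (P : MvPolynomial (Fin 2) K) :
    cuspEval K θ (MvPolynomial.X j * P) = ![cusp1 K θ, cusp2 K θ] j * cuspEval K θ P := by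
  simp only [cuspEval, map_mul, MvPolynomial.aeval_X]

theorem MvPolynomial.X_mul_mem_homogeneousSubmodule {σ R : Type*} [CommSemiring R] (j : σ)
    {n : ℕ} {P : MvPolynomial σ R} (hP : P ∈ homogeneousSubmodule σ R n) :
    X j * P ∈ homogeneousSubmodule σ R (n + 1) := by
  rw [mem_homogeneousSubmodule, add_comm]
  exact (isHomogeneous_X R j).mul hP

theorem X_mul_mem_Vsp {K : Type*} [RCLike K] {i : ℕ}
    {ξ : MvPolynomial (Fin 2) K × MvPolynomial (Fin 2) K} (hξ : ξ ∈ Vsp K i) (j : Fin 2) :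
    (MvPolynomial.X j * ξ.1, MvPolynomial.X j * ξ.2) ∈ Vsp K (i + 1) :=
  ⟨MvPolynomial.X_mul_mem_homogeneousSubmodule j hξ.1,
    MvPolynomial.X_mul_mem_homogeneousSubmodule j hξ.2⟩

theorem mul_sub_mul_dvd {R : Type*} [CommRing R] {p q c a η d : R}
    (hc : p ∣ c) (ha : q ∣ a - η * d) : p * q ∣ c * a - (c * η) * d := by
  simpa only [mul_sub, mul_assoc] using mul_dvd_mul hc ha

theorem LiftTang.X_mul {K : Type*} [RCLike K] {i : ℕ} {θ : ℝ}
    {ξ : MvPolynomial (Fin 2) K × MvPolynomial (Fin 2) K} (h : LiftTang K i θ ξ) (j : Fin 2) :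
    LiftTang K (i + 1) θ (MvPolynomial.X j * ξ.1, MvPolynomial.X j * ξ.2) := by
  obtain ⟨η, h₁, h₂⟩ := h
  have hexp : 2 * (i + 1) + 2 = 2 + (2 * i + 2) := by ring
  refine ⟨![cusp1 K θ, cusp2 K θ] j * η, ?_, ?_⟩ <;>
    rw [cuspEval_X_mul, hexp, pow_add]
  · exact mul_sub_mul_dvd (X_sq_dvd_cusp K θ j) h₁
  · exact mul_sub_mul_dvd (X_sq_dvd_cusp K θ j) h₂

open MvPolynomial in
/-- The multiplication step in the induction of the direct sum decomposition theorem: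
if `ξ = (P, Q) ∈ V_i` is `i`-liftably tangent to `c_θ`, then `X·ξ = (X·P, X·Q)` and
`Y·ξ = (Y·P, Y·Q)` belong to `V_{i+1}` and are `(i+1)`-liftably tangent to `c_θ`. -/
theorem mul_coordinate_liftTang (K : Type*) [RCLike K] (i : ℕ) (θ : ℝ)
    (ξ : MvPolynomial (Fin 2) K × MvPolynomial (Fin 2) K) (hξ : ξ ∈ Vsp K i)
    (h : LiftTang K i θ ξ) :
    ((X 0 * ξ.1, X 0 * ξ.2) ∈ Vsp K (i + 1) ∧
      LiftTang K (i + 1) θ (X 0 * ξ.1, X 0 * ξ.2)) ∧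
    ((X 1 * ξ.1, X 1 * ξ.2) ∈ Vsp K (i + 1) ∧
      LiftTang K (i + 1) θ (X 1 * ξ.1, X 1 * ξ.2)) :=
  ⟨⟨X_mul_mem_Vsp hξ 0, h.X_mul 0⟩, ⟨X_mul_mem_Vsp hξ 1, h.X_mul 1⟩⟩
end

section
/- For the standard cusp c(x) = (x², x³), there do not exist formal power series u, v ∈ K⟦X, Y⟧ and η ∈ K⟦x⟧ such that u(x², x³) + 2x·η(x) = 0 and v(x², x³) + 3x²·η(x) = x in K⟦x⟧. (That is, the vector field germ (0, x) along c does not belong to T𝒜_e(c) = T𝓡_e(c) + T𝓛_e(c); in particular θ_S(c) ≠ T𝒜_e(c), which is the fact underlying the non-surjectivity of the reduced Kodaira–Spencer–Mather map ω̄c_θ for every cusp c_θ.) -/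
/-! Every element of `c*(K⟦X, Y⟧) + x²·K⟦x⟧` lacks an `x`-term, because `1` is not of the form
`2a + 3b`; so comparing the coefficients of `x` in the second equation gives `0 = 1`. -/

/-- Substitution of `(x², x³)` into a two-variable formal power series `u ∈ K⟦X, Y⟧`:
the coefficient of `xⁿ` in `u(x², x³)` is the (finite) sum of the coefficients of
`X^a Y^b` in `u` over all `(a, b)` with `2a + 3b = n`.  This is the pullback
`c* : K⟦X, Y⟧ → K⟦x⟧` along the standard cusp `c(x) = (x², x³)`. -/
noncomputable def substCusp (K : Type*) [RCLike K] (u : MvPowerSeries (Fin 2) K) :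
    PowerSeries K :=
  PowerSeries.mk fun n =>
    ∑ p ∈ (Finset.range (n + 1) ×ˢ Finset.range (n + 1)).filter
        (fun p : ℕ × ℕ => 2 * p.1 + 3 * p.2 = n),
      MvPowerSeries.coeff (R := K) (Finsupp.equivFunOnFinite.symm ![p.1, p.2]) u

open PowerSeries

theorem coeff_one_substCusp (K : Type*) [RCLike K] (u : MvPowerSeries (Fin 2) K) :
    coeff 1 (substCusp K u) = 0 := by
  have no_weight_one : (Finset.range 2 ×ˢ Finset.range 2).filter
      (fun p : ℕ × ℕ => 2 * p.1 + 3 * p.2 = 1) = ∅ := by decide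
  simp only [substCusp, coeff_mk, no_weight_one, Finset.sum_empty]

theorem coeff_one_X_sq_mul {R : Type*} [Semiring R] (f : R⟦X⟧) :
    coeff 1 (X ^ 2 * f) = 0 := by
  simp [coeff_X_pow_mul']

/-- For the standard cusp `c(x) = (x², x³)`, the vector field germ `(0, x)` along `c`
does not belong to `T𝒜_e(c) = T𝓡_e(c) + T𝓛_e(c)`: there are no formal power series
`u, v ∈ K⟦X, Y⟧` and `η ∈ K⟦x⟧` with `u(x², x³) + 2x·η(x) = 0` and
`v(x², x³) + 3x²·η(x) = x`.  This underlies the non-surjectivity of the reduced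
Kodaira–Spencer–Mather map `ω̄c_θ` for every cusp. -/
theorem cusp_not_infinitesimally_stable (K : Type*) [RCLike K] :
    ¬ ∃ (u v : MvPowerSeries (Fin 2) K) (η : PowerSeries K),
      substCusp K u + 2 * PowerSeries.X * η = 0 ∧
      substCusp K v + 3 * PowerSeries.X ^ 2 * η = PowerSeries.X := by
  rintro ⟨u, v, η, -, hv⟩
  have h := congrArg (coeff 1) hv
  rw [map_add, coeff_one_substCusp, mul_comm 3, mul_assoc, coeff_one_X_sq_mul, add_zero,
    coeff_one_X] at h
  exact zero_ne_one h
end
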